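/- Let n ≥ 1, let d : Fin n → Fin n → ℝ be symmetric with d i i = 0 for all i, and let w : Fin n → ℝ. Define p i j = (d i j + w i + w j)/2. Then p is a partial semimetric on Fin n if and only if d is a semimetric, w i ≥ 0 for all i, and d i j ≥ w i − w j for all i, j. (That is, P maps the cone dWMET_n of down-weighted semimetrics onto the cone PMET_n of partial semimetrics.) -/

import Mathlib

def IsSemimetric {n : ℕ} (d : Fin n → Fin n → ℝ) : Prop :=
  (∀ i j, d i j = d j i) ∧ (∀ i, d i i = 0) ∧ (∀ i j, 0 ≤ d i j) ∧
    (∀ i j k, d i j ≤ d i k + d k j)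

def IsWeakPartialSemimetric {n : ℕ} (f : Fin n → Fin n → ℝ) : Prop :=
  (∀ i j, f i j = f j i) ∧ (∀ i, 0 ≤ f i i) ∧
    (∀ i j k, 0 ≤ f i k + f k j - f i j - f k k)

def IsPartialSemimetric {n : ℕ} (f : Fin n → Fin n → ℝ) : Prop :=
  IsWeakPartialSemimetric f ∧ ∀ i j, f i i ≤ f i j

/-!
Since `d i i = 0`, the formula `p i j = (d i j + w i + w j) / 2` gives `p i i = w i`,
`2 (p i j - p i i) = d i j - (w i - w j)` and
`2 (p i k + p k j - p i j - p k k) = d i k + d k j - d i j`.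
So the axioms of a partial semimetric for `p` are exactly `w ≥ 0`, down-weightedness and the
triangle inequality for `d`. Nonnegativity of `d` comes for free: adding `d i j ≥ w i - w j` and
`d j i ≥ w j - w i` gives `2 d i j ≥ 0`.
-/

section PartialOfWeighted

variable {α : Type*} {d p : α → α → ℝ} {w : α → ℝ}

theorem diag_nonneg_iff_weight_nonneg (hdiag : ∀ i, d i i = 0)
    (hp : ∀ i j, p i j = (d i j + w i + w j) / 2) (i : α) : 0 ≤ p i i ↔ 0 ≤ w i := by
  rw [hp, hdiag]
  constructor <;> intro h <;> linarith

theorem diag_le_iff_sub_weight_le (hdiag : ∀ i, d i i = 0)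
    (hp : ∀ i j, p i j = (d i j + w i + w j) / 2) (i j : α) :
    p i i ≤ p i j ↔ w i - w j ≤ d i j := by
  rw [hp i i, hp i j, hdiag]
  constructor <;> intro h <;> linarith

theorem triangle_defect_nonneg_iff (hdiag : ∀ i, d i i = 0)
    (hp : ∀ i j, p i j = (d i j + w i + w j) / 2) (i j k : α) :
    0 ≤ p i k + p k j - p i j - p k k ↔ d i j ≤ d i k + d k j := by
  rw [hp i k, hp k j, hp i j, hp k k, hdiag]
  constructor <;> intro h <;> linarith

theorem symm_of_dist_symm (hsym : ∀ i j, d i j = d j i)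
    (hp : ∀ i j, p i j = (d i j + w i + w j) / 2) (i j : α) : p i j = p j i := by
  rw [hp, hp, hsym]
  ring

theorem nonneg_of_sub_weight_le (hsym : ∀ i j, d i j = d j i)
    (hdw : ∀ i j, w i - w j ≤ d i j) (i j : α) : 0 ≤ d i j := by
  linarith [hdw i j, hdw j i, hsym i j]

end PartialOfWeighted

theorem stmt_1_general (n : ℕ) (d : Fin n → Fin n → ℝ) (w : Fin n → ℝ)
    (hsym : ∀ i j, d i j = d j i) (hdiag : ∀ i, d i i = 0)
    (p : Fin n → Fin n → ℝ) (hp : ∀ i j, p i j = (d i j + w i + w j) / 2) :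
    IsPartialSemimetric p ↔
      IsSemimetric d ∧ (∀ i, 0 ≤ w i) ∧ ∀ i j, w i - w j ≤ d i j := by
  simp only [IsPartialSemimetric, IsWeakPartialSemimetric, IsSemimetric,
    diag_nonneg_iff_weight_nonneg hdiag hp, diag_le_iff_sub_weight_le hdiag hp,
    triangle_defect_nonneg_iff hdiag hp]
  have hpsym := symm_of_dist_symm hsym hp
  have hdnn := nonneg_of_sub_weight_le hsym (w := w)
  tauto

/-- `P` maps down-weighted semimetrics onto partial semimetrics. -/
theorem stmt_1 (n : ℕ) (hn : 1 ≤ n) (d : Fin n → Fin n → ℝ) (w : Fin n → ℝ)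
    (hsym : ∀ i j, d i j = d j i) (hdiag : ∀ i, d i i = 0)
    (p : Fin n → Fin n → ℝ) (hp : ∀ i j, p i j = (d i j + w i + w j) / 2) :
    IsPartialSemimetric p ↔
      IsSemimetric d ∧ (∀ i, 0 ≤ w i) ∧ ∀ i j, w i - w j ≤ d i j :=
  stmt_1_general n d w hsym hdiag p hp
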